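/- For every integer r with 2 ≤ r ≤ 6, ex_r(n, C_4) = Ω(n^{3/2}), i.e. there exists a constant c > 0 such that for all sufficiently large n there is an r-uniform hypergraph on n vertices containing no Berge-C_4 with at least c·n^{3/2} hyperedges. -/

import Mathlib

open Filter

/-- `G` contains a copy of `F` (a subgraph isomorphic to `F`). -/
def ContainsCopy {α β : Type*} (F : SimpleGraph α) (G : SimpleGraph β) : Prop :=
  ∃ f : α → β, Function.Injective f ∧ ∀ ⦃u v⦄, F.Adj u v → G.Adj (f u) (f v)

/-- The hypergraph `H` (a finite family of hyperedges) contains a Berge-`F`. -/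
def IsBerge {α V : Type*} (F : SimpleGraph α) (H : Finset (Finset V)) : Prop :=
  ∃ (ψ : α → V) (φ : Sym2 α → Finset V),
    Function.Injective ψ ∧ Set.InjOn φ F.edgeSet ∧
    (∀ e ∈ F.edgeSet, φ e ∈ H) ∧
    ∀ ⦃u v⦄, F.Adj u v → ψ u ∈ φ s(u, v) ∧ ψ v ∈ φ s(u, v)

/-- `exr r n F`: max number of hyperedges of an `r`-uniform Berge-`F`-free
hypergraph on `n` vertices. -/
noncomputable def exr {α : Type*} (r n : ℕ) (F : SimpleGraph α) : ℕ :=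
  sSup {m | ∃ H : Finset (Finset (Fin n)),
    (∀ e ∈ H, e.card = r) ∧ ¬ IsBerge F H ∧ H.card = m}

/-- A hypergraph is linear if distinct hyperedges meet in at most one vertex. -/
def LinearHypergraph {V : Type*} [DecidableEq V] (H : Finset (Finset V)) : Prop :=
  ∀ e₁ ∈ H, ∀ e₂ ∈ H, e₁ ≠ e₂ → (e₁ ∩ e₂).card ≤ 1

/-- `exrL r n F`: max number of hyperedges of an `r`-uniform linear
Berge-`F`-free hypergraph on `n` vertices. -/
noncomputable def exrL {α : Type*} (r n : ℕ) (F : SimpleGraph α) : ℕ :=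
  sSup {m | ∃ H : Finset (Finset (Fin n)),
    (∀ e ∈ H, e.card = r) ∧ LinearHypergraph H ∧ ¬ IsBerge F H ∧ H.card = m}

/-- The Ramsey number of `F` and `G`. -/
noncomputable def ramsey {α β : Type*} (F : SimpleGraph α) (G : SimpleGraph β) : ℕ :=
  sInf {N | ∀ C : SimpleGraph (Fin N), ContainsCopy F C ∨ ContainsCopy G Cᶜ}

/-- The 2-shadow of a hypergraph. -/
def shadow {V : Type*} (H : Finset (Finset V)) : SimpleGraph V where
  Adj u v := u ≠ v ∧ ∃ e ∈ H, u ∈ e ∧ v ∈ e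
  symm := ⟨by rintro u v ⟨h, e, he, hu, hv⟩; exact ⟨h.symm, e, he, hv, hu⟩⟩
  loopless := ⟨fun u h => h.1 rfl⟩

/-- The graph Turán number `ex(n,F)`. -/
noncomputable def exGraph {α : Type*} (n : ℕ) (F : SimpleGraph α) : ℕ :=
  sSup {m | ∃ G : SimpleGraph (Fin n), ¬ ContainsCopy F G ∧ G.edgeSet.ncard = m}

/-- `ex(n, K_r, F)`: max number of `r`-cliques in an `F`-free graph on `n` vertices. -/
noncomputable def exClique {α : Type*} (n r : ℕ) (F : SimpleGraph α) : ℕ :=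
  sSup {m | ∃ G : SimpleGraph (Fin n), ¬ ContainsCopy F G ∧
    {s : Finset (Fin n) | G.IsNClique r s}.ncard = m}

/-- A `t`-admissible partition of the vertices of `F`: parts have size at most `t`
and between any two distinct parts there is at most one edge of `F`. -/
def IsAdmissible {α : Type*} [Fintype α] [DecidableEq α] (t : ℕ) (F : SimpleGraph α)
    (P : Finpartition (Finset.univ : Finset α)) : Prop :=
  (∀ A ∈ P.parts, A.card ≤ t) ∧
  ∀ A ∈ P.parts, ∀ B ∈ P.parts, A ≠ B →
    {p : α × α | p.1 ∈ A ∧ p.2 ∈ B ∧ F.Adj p.1 p.2}.ncard ≤ 1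

/-- The graph obtained from `F` by contracting each part of the partition `P`. -/
def contractGraph {α : Type*} [Fintype α] [DecidableEq α] (F : SimpleGraph α)
    (P : Finpartition (Finset.univ : Finset α)) : SimpleGraph {A // A ∈ P.parts} where
  Adj A B := A ≠ B ∧ ∃ v ∈ (A : Finset α), ∃ w ∈ (B : Finset α), F.Adj v w
  symm := by
    constructor
    rintro A B ⟨hne, v, hv, w, hw, hadj⟩
    exact ⟨hne.symm, w, hw, v, hv, hadj.symm⟩
  loopless := by constructor; rintro A ⟨hne, -⟩; exact hne rfl


namespace Stmt10Aux

/-! ### A Sidon set in ℕ based on i ↦ 4pi + 2(i² mod p) -/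

def f (p i : ℕ) : ℕ := 4*p*i + 2*(i^2 % p)

def A (p : ℕ) : Finset ℕ := (Finset.range p).image (f p)

lemma f_lt_f {p i j : ℕ} (hp : 0 < p) (hij : i < j) : f p i < f p j := by
  have h1 : i^2 % p < p := Nat.mod_lt _ hp
  calc f p i = 4*p*i + 2*(i^2 % p) := rfl
    _ < 4*p*(i+1) := by
        have he : 4*p*(i+1) = 4*p*i + 4*p := by ring
        rw [he]
        have : 2*(i^2 % p) < 4*p := by omega
        exact Nat.add_lt_add_left this _
    _ ≤ 4*p*j := Nat.mul_le_mul_left _ hij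
    _ ≤ f p j := Nat.le_add_right _ _

lemma f_inj {p i j : ℕ} (hp : 0 < p) (h : f p i = f p j) : i = j := by
  rcases lt_trichotomy i j with hlt | he | hgt
  · exact absurd h (Nat.ne_of_lt (f_lt_f hp hlt))
  · exact he
  · exact absurd h.symm (Nat.ne_of_lt (f_lt_f hp hgt))

lemma mem_A {p i : ℕ} (hi : i < p) : f p i ∈ A p :=
  Finset.mem_image.mpr ⟨i, Finset.mem_range.mpr hi, rfl⟩

lemma div_unique {P s1 s2 R1 R2 : ℕ} (hR1 : R1 < P) (hR2 : R2 < P)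
    (h : P*s1 + R1 = P*s2 + R2) : s1 = s2 ∧ R1 = R2 := by
  have key : ∀ a b r1 r2 : ℕ, r1 < P → r2 < P → a ≤ b → P*a + r1 = P*b + r2 → a = b ∧ r1 = r2 := by
    intro a b r1 r2 h1 h2 hab heq
    obtain ⟨d, rfl⟩ := Nat.exists_eq_add_of_le hab
    have hexp : P*(a+d) = P*a + P*d := by ring
    rw [hexp] at heq
    have h3 : r1 = P*d + r2 := by omega
    rcases Nat.eq_zero_or_pos d with rfl | hd
    · exact ⟨rfl, by simpa using h3⟩
    · exfalso
      have h4 : P*1 ≤ P*d := Nat.mul_le_mul_left _ hd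
      rw [Nat.mul_one] at h4
      omega
  rcases le_total s1 s2 with hle | hle
  · exact key _ _ _ _ hR1 hR2 hle h
  · obtain ⟨h1, h2⟩ := key _ _ _ _ hR2 hR1 hle h.symm
    exact ⟨h1.symm, h2.symm⟩

lemma sidon {p : ℕ} (hp : p.Prime) (hp2 : p ≠ 2) {i j k l : ℕ}
    (hi : i < p) (hj : j < p) (hk : k < p) (hl : l < p)
    (h : f p i + f p k = f p j + f p l) :
    (i = j ∧ k = l) ∨ (i = l ∧ k = j) := by
  have hp0 : 0 < p := hp.pos
  have hri : i^2 % p < p := Nat.mod_lt _ hp0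
  have hrj : j^2 % p < p := Nat.mod_lt _ hp0
  have hrk : k^2 % p < p := Nat.mod_lt _ hp0
  have hrl : l^2 % p < p := Nat.mod_lt _ hp0
  have h2 : (2*p)*(i+k) + (i^2 % p + k^2 % p) = (2*p)*(j+l) + (j^2 % p + l^2 % p) := by
    unfold f at h; ring_nf at h ⊢; linarith
  obtain ⟨hsum, hres⟩ := div_unique (by omega) (by omega) h2
  haveI : Fact p.Prime := ⟨hp⟩
  have hmod : (i^2 + k^2) % p = (j^2 + l^2) % p := by
    rw [Nat.add_mod (i^2), Nat.add_mod (j^2), hres]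
  have hcast : ((i:ZMod p)^2 + (k:ZMod p)^2) = ((j:ZMod p)^2 + (l:ZMod p)^2) := by
    have := (ZMod.natCast_eq_natCast_iff' (i^2+k^2) (j^2+l^2) p).mpr hmod
    push_cast at this
    exact this
  have hsumZ : (i:ZMod p) + (k:ZMod p) = (j:ZMod p) + (l:ZMod p) := by
    have : ((i+k : ℕ) : ZMod p) = ((j+l : ℕ) : ZMod p) := by rw [hsum]
    push_cast at this
    exact this
  have h2ne : (2 : ZMod p) ≠ 0 := by
    intro h0
    have hc : ((2:ℕ) : ZMod p) = 0 := by push_cast; exact h0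
    have hdvd : p ∣ 2 := (ZMod.natCast_eq_zero_iff 2 p).mp hc
    have hle := Nat.le_of_dvd (by norm_num) hdvd
    have h2le := hp.two_le
    exact hp2 (by omega)
  have hprod : (i:ZMod p) * (k:ZMod p) = (j:ZMod p) * (l:ZMod p) := by
    have h4 : (2:ZMod p) * ((i:ZMod p)*(k:ZMod p)) = 2 * ((j:ZMod p)*(l:ZMod p)) := by
      linear_combination ((i:ZMod p)+(k:ZMod p)+(j:ZMod p)+(l:ZMod p)) * hsumZ - hcast
    exact mul_left_cancel₀ h2ne h4
  have hroot : ((j:ZMod p) - (i:ZMod p)) * ((j:ZMod p) - (k:ZMod p)) = 0 := by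
    linear_combination (-(j:ZMod p)) * hsumZ + hprod
  have hval : ∀ a b : ℕ, a < p → b < p → (a : ZMod p) = (b : ZMod p) → a = b := by
    intro a b ha hb hab
    have := congrArg ZMod.val hab
    rwa [ZMod.val_cast_of_lt ha, ZMod.val_cast_of_lt hb] at this
  rcases mul_eq_zero.mp hroot with h0 | h0
  · have hji : j = i := hval j i hj hi (by linear_combination h0)
    omega
  · have hjk : j = k := hval j k hj hk (by linear_combination h0)
    omega

/-- No 4-cycle in the Sidon graph `x ~ y ↔ x + y ∈ A p`. -/
lemma noC4 {p : ℕ} (hp : p.Prime) (hp2 : p ≠ 2) {w1 w2 w3 w4 : ℕ}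
    (h13 : w1 ≠ w3) (h24 : w2 ≠ w4)
    (e1 : w1 + w2 ∈ A p) (e2 : w2 + w3 ∈ A p) (e3 : w3 + w4 ∈ A p) (e4 : w4 + w1 ∈ A p) :
    False := by
  obtain ⟨i1, hi1, hf1⟩ := Finset.mem_image.mp e1
  obtain ⟨i2, hi2, hf2⟩ := Finset.mem_image.mp e2
  obtain ⟨i3, hi3, hf3⟩ := Finset.mem_image.mp e3
  obtain ⟨i4, hi4, hf4⟩ := Finset.mem_image.mp e4
  rw [Finset.mem_range] at hi1 hi2 hi3 hi4
  have hsum : f p i1 + f p i3 = f p i2 + f p i4 := by omega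
  rcases sidon hp hp2 hi1 hi2 hi3 hi4 hsum with ⟨ha, hb⟩ | ⟨ha, hb⟩
  · subst ha; omega
  · subst ha; omega

/-! ### The triangles -/

def D (p : ℕ) : ℕ := 4*(p*p)
def h0 (p : ℕ) : ℕ := (p+1)/2
def q0 (p : ℕ) : ℕ := (p-1)/8

def Ix (p : ℕ) : Finset (ℕ × ℕ × ℕ) :=
  Finset.Ico (h0 p) (h0 p + q0 p) ×ˢ
    (Finset.Ico (h0 p + q0 p) (h0 p + 2*q0 p) ×ˢ Finset.Ico (h0 p + 2*q0 p) (h0 p + 3*q0 p))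

def X (p : ℕ) (t : ℕ × ℕ × ℕ) : ℕ := (f p t.1 + f p t.2.1 - f p t.2.2)/2
def Y (p : ℕ) (t : ℕ × ℕ × ℕ) : ℕ := (f p t.1 + f p t.2.2 - f p t.2.1)/2
def Z (p : ℕ) (t : ℕ × ℕ × ℕ) : ℕ := (f p t.2.1 + f p t.2.2 - f p t.1)/2

def tri (p : ℕ) (t : ℕ × ℕ × ℕ) : Finset ℕ := {X p t, Y p t, Z p t}

lemma ix_bounds {p : ℕ} {t : ℕ × ℕ × ℕ} (ht : t ∈ Ix p) :
    h0 p ≤ t.1 ∧ t.1 < t.2.1 ∧ t.2.1 < t.2.2 ∧ t.2.2 < p := by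
  simp only [Ix, Finset.mem_product, Finset.mem_Ico] at ht
  have e1 : h0 p = (p+1)/2 := rfl
  have e2 : q0 p = (p-1)/8 := rfl
  omega

lemma xyz_arith {a b c Dv : ℕ} (hab : a < b) (hbc : b < c) (hcab : c < a + b)
    (ha2 : a % 2 = 0) (hb2 : b % 2 = 0) (hc2 : c % 2 = 0) (hcD : c < Dv) :
    (a+b-c)/2 + (a+c-b)/2 = a ∧ (a+b-c)/2 + (b+c-a)/2 = b ∧ (a+c-b)/2 + (b+c-a)/2 = c
    ∧ (a+b-c)/2 < (a+c-b)/2 ∧ (a+c-b)/2 < (b+c-a)/2 ∧ (b+c-a)/2 < Dv := by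
  omega

lemma f_even (p i : ℕ) : f p i % 2 = 0 := by
  have : f p i = 2*(2*p*i + i^2 % p) := by unfold f; ring
  omega

/-- The key facts about a triangle. -/
lemma key {p : ℕ} (hp3 : 3 ≤ p) (hodd : p % 2 = 1) {t : ℕ × ℕ × ℕ} (ht : t ∈ Ix p) :
    X p t + Y p t = f p t.1 ∧ X p t + Z p t = f p t.2.1 ∧ Y p t + Z p t = f p t.2.2 ∧
    X p t < Y p t ∧ Y p t < Z p t ∧ Z p t < D p := by
  obtain ⟨hi, hij, hjk, hkp⟩ := ix_bounds ht
  obtain ⟨i, j, k⟩ := t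
  simp only at hi hij hjk hkp ⊢
  have hp0 : 0 < p := by omega
  have hab : f p i < f p j := f_lt_f hp0 hij
  have hbc : f p j < f p k := f_lt_f hp0 hjk
  -- c bound : f p k + 2p + 2 ≤ 4*(p*p)
  have hmodk : k^2 % p < p := Nat.mod_lt _ hp0
  have hcD : f p k + 2*p + 2 ≤ 4*(p*p) := by
    have h1 : f p k + 2*p + 2 ≤ 4*p*k + 4*p := by
      unfold f; omega
    have h2 : 4*p*k + 4*p = 4*p*(k+1) := by ring
    have h3 : 4*p*(k+1) ≤ 4*p*p := Nat.mul_le_mul_left _ (by omega)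
    have h4 : 4*p*p = 4*(p*p) := by ring
    omega
  -- a lower bound : 2*(p*p) + 2*p ≤ f p i
  have halb : 2*(p*p) + 2*p ≤ f p i := by
    have h1 : p + 1 ≤ 2 * h0 p := by unfold h0; omega
    have h2 : (2*p)*(p+1) ≤ (2*p)*(2*h0 p) := Nat.mul_le_mul_left _ h1
    have h3 : (2*p)*(2*h0 p) = (4*p)*(h0 p) := by ring
    have h4 : (4*p)*(h0 p) ≤ (4*p)*i := Nat.mul_le_mul_left _ hi
    have h5 : (4*p)*i ≤ f p i := by unfold f; omega
    have h6 : (2*p)*(p+1) = 2*(p*p) + 2*p := by ring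
    omega
  have hcab : f p k < f p i + f p j := by
    have : f p i < f p j := hab
    omega
  have := xyz_arith hab hbc hcab (f_even p i) (f_even p j) (f_even p k)
    (show f p k < 4*(p*p) by omega)
  unfold X Y Z D
  simp only
  -- rearrange : note X = (a+b-c)/2 with a = f p i, b = f p j, c = f p k
  omega

lemma tri_card {p : ℕ} (hp3 : 3 ≤ p) (hodd : p % 2 = 1) {t : ℕ × ℕ × ℕ} (ht : t ∈ Ix p) :
    (tri p t).card = 3 := by
  obtain ⟨-, -, -, h1, h2, -⟩ := key hp3 hodd ht
  rw [tri, Finset.card_insert_of_notMem (by simp; omega),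
    Finset.card_insert_of_notMem (by simp; omega), Finset.card_singleton]

lemma tri_clique {p : ℕ} (hp3 : 3 ≤ p) (hodd : p % 2 = 1) {t : ℕ × ℕ × ℕ} (ht : t ∈ Ix p) :
    ∀ u ∈ tri p t, ∀ v ∈ tri p t, u ≠ v → u + v ∈ A p := by
  obtain ⟨hxy, hxz, hyz, hXY, hYZ, hZD⟩ := key hp3 hodd ht
  obtain ⟨hi, hij, hjk, hkp⟩ := ix_bounds ht
  have hiA : f p t.1 ∈ A p := mem_A (by omega)
  have hjA : f p t.2.1 ∈ A p := mem_A (by omega)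
  have hkA : f p t.2.2 ∈ A p := mem_A (by omega)
  intro u hu v hv huv
  simp only [tri, Finset.mem_insert, Finset.mem_singleton] at hu hv
  rcases hu with rfl | rfl | rfl <;> rcases hv with rfl | rfl | rfl
  · exact absurd rfl huv
  · rw [hxy]; exact hiA
  · rw [hxz]; exact hjA
  · rw [Nat.add_comm, hxy]; exact hiA
  · exact absurd rfl huv
  · rw [hyz]; exact hkA
  · rw [Nat.add_comm, hxz]; exact hjA
  · rw [Nat.add_comm, hyz]; exact hkA
  · exact absurd rfl huv

lemma tri_inj {p : ℕ} (hp3 : 3 ≤ p) (hodd : p % 2 = 1) {t t' : ℕ × ℕ × ℕ}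
    (ht : t ∈ Ix p) (ht' : t' ∈ Ix p) (h : tri p t = tri p t') : t = t' := by
  obtain ⟨hxy, hxz, hyz, hXY, hYZ, hZD⟩ := key hp3 hodd ht
  obtain ⟨hxy', hxz', hyz', hXY', hYZ', hZD'⟩ := key hp3 hodd ht'
  have hp0 : 0 < p := by omega
  have m1 : X p t' ∈ tri p t := by rw [h]; simp [tri]
  have m2 : Y p t' ∈ tri p t := by rw [h]; simp [tri]
  have m3 : Z p t' ∈ tri p t := by rw [h]; simp [tri]
  simp only [tri, Finset.mem_insert, Finset.mem_singleton] at m1 m2 m3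
  have hXX : X p t = X p t' ∧ Y p t = Y p t' ∧ Z p t = Z p t' := by omega
  have e1 : t.1 = t'.1 := f_inj hp0 (by omega)
  have e2 : t.2.1 = t'.2.1 := f_inj hp0 (by omega)
  have e3 : t.2.2 = t'.2.2 := f_inj hp0 (by omega)
  obtain ⟨i, j, k⟩ := t; obtain ⟨i', j', k'⟩ := t'
  simp only at e1 e2 e3
  simp [e1, e2, e3]

/-! ### The hyperedges -/

def elist (r p : ℕ) (t : ℕ × ℕ × ℕ) : List ℕ :=
  List.take r [X p t, Y p t, Z p t, X p t + D p, Y p t + D p, Z p t + D p]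

def EN (r p : ℕ) (t : ℕ × ℕ × ℕ) : Finset ℕ := (elist r p t).toFinset

lemma list_facts {x y z d : ℕ} (h1 : x < y) (h2 : y < z) (h3 : z < d) :
    ([x, y, z, x+d, y+d, z+d] : List ℕ).Nodup := by
  simp only [List.nodup_cons, List.mem_cons, List.mem_singleton, List.not_mem_nil,
    or_false, List.nodup_nil, and_true, not_or]
  norm_num
  omega

lemma EN_card {r p : ℕ} (hr2 : 2 ≤ r) (hr6 : r ≤ 6) (hp3 : 3 ≤ p) (hodd : p % 2 = 1)
    {t : ℕ × ℕ × ℕ} (ht : t ∈ Ix p) : (EN r p t).card = r := by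
  obtain ⟨-, -, -, hXY, hYZ, hZD⟩ := key hp3 hodd ht
  have hnd : (elist r p t).Nodup :=
    (List.take_sublist r _).nodup (list_facts hXY hYZ hZD)
  rw [EN, List.card_toFinset, hnd.dedup]
  rw [elist, List.length_take]
  simp; omega

lemma mem_EN_lt {r p : ℕ} (hp3 : 3 ≤ p) (hodd : p % 2 = 1)
    {t : ℕ × ℕ × ℕ} (ht : t ∈ Ix p) {w : ℕ} (hw : w ∈ EN r p t) : w < 2 * D p := by
  obtain ⟨-, -, -, hXY, hYZ, hZD⟩ := key hp3 hodd ht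
  rw [EN, List.mem_toFinset] at hw
  have hw' := List.mem_of_mem_take hw
  simp only [List.mem_cons, List.mem_singleton, List.not_mem_nil, or_false] at hw'
  omega

lemma mem_EN_mod {r p : ℕ} (hp3 : 3 ≤ p) (hodd : p % 2 = 1)
    {t : ℕ × ℕ × ℕ} (ht : t ∈ Ix p) {w : ℕ} (hw : w ∈ EN r p t) : w % D p ∈ tri p t := by
  obtain ⟨-, -, -, hXY, hYZ, hZD⟩ := key hp3 hodd ht
  rw [EN, List.mem_toFinset] at hw
  have hw' := List.mem_of_mem_take hw
  simp only [List.mem_cons, List.mem_singleton, List.not_mem_nil, or_false] at hw'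
  have hX : X p t < D p := by omega
  have hY : Y p t < D p := by omega
  simp only [tri, Finset.mem_insert, Finset.mem_singleton]
  rcases hw' with rfl | rfl | rfl | rfl | rfl | rfl
  · left; exact Nat.mod_eq_of_lt hX
  · right; left; exact Nat.mod_eq_of_lt hY
  · right; right; exact Nat.mod_eq_of_lt hZD
  · left; rw [Nat.add_mod_right]; exact Nat.mod_eq_of_lt hX
  · right; left; rw [Nat.add_mod_right]; exact Nat.mod_eq_of_lt hY
  · right; right; rw [Nat.add_mod_right]; exact Nat.mod_eq_of_lt hZD

lemma take_filter_lt {x y z d : ℕ} (h1 : x < y) (h2 : y < z) (h3 : z < d)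
    {r : ℕ} (hr3 : 3 ≤ r) (hr6 : r ≤ 6) :
    ((List.take r [x, y, z, x+d, y+d, z+d]).toFinset.filter (· < d)) = ({x, y, z} : Finset ℕ) := by
  have e3 : List.take 3 [x, y, z, x+d, y+d, z+d] = [x, y, z] := rfl
  have e4 : List.take 4 [x, y, z, x+d, y+d, z+d] = [x, y, z, x+d] := rfl
  have e5 : List.take 5 [x, y, z, x+d, y+d, z+d] = [x, y, z, x+d, y+d] := rfl
  have e6 : List.take 6 [x, y, z, x+d, y+d, z+d] = [x, y, z, x+d, y+d, z+d] := rfl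
  interval_cases r <;> [rw [e3]; rw [e4]; rw [e5]; rw [e6]] <;>
    · ext w
      simp only [Finset.mem_filter, List.mem_toFinset, List.mem_cons, List.not_mem_nil,
        or_false, Finset.mem_insert, Finset.mem_singleton]
      omega

lemma EN_filter3 {r p : ℕ} (hr3 : 3 ≤ r) (hr6 : r ≤ 6) (hp3 : 3 ≤ p) (hodd : p % 2 = 1)
    {t : ℕ × ℕ × ℕ} (ht : t ∈ Ix p) :
    (EN r p t).filter (· < D p) = tri p t := by
  obtain ⟨-, -, -, hXY, hYZ, hZD⟩ := key hp3 hodd ht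
  rw [EN, elist, tri]
  exact take_filter_lt hXY hYZ hZD hr3 hr6

lemma EN_two {p : ℕ} (t : ℕ × ℕ × ℕ) : EN 2 p t = ({X p t, Y p t} : Finset ℕ) := by
  have hel : elist 2 p t = [X p t, Y p t] := rfl
  rw [EN, hel]
  simp

lemma EN_inj {r p : ℕ} (hp : p.Prime) (hp3 : 3 ≤ p) (hodd : p % 2 = 1)
    (hr2 : 2 ≤ r) (hr6 : r ≤ 6) {t t' : ℕ × ℕ × ℕ}
    (ht : t ∈ Ix p) (ht' : t' ∈ Ix p) (h : EN r p t = EN r p t') : t = t' := by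
  have hp2 : p ≠ 2 := by omega
  have hp0 : 0 < p := by omega
  rcases Nat.lt_or_ge r 3 with hr3 | hr3
  · -- r = 2
    have hr : r = 2 := by omega
    subst hr
    rw [EN_two, EN_two] at h
    obtain ⟨hxy, hxz, hyz, hXY, hYZ, hZD⟩ := key hp3 hodd ht
    obtain ⟨hxy', hxz', hyz', hXY', hYZ', hZD'⟩ := key hp3 hodd ht'
    have m1 : X p t' ∈ ({X p t, Y p t} : Finset ℕ) := by rw [h]; simp
    have m2 : Y p t' ∈ ({X p t, Y p t} : Finset ℕ) := by rw [h]; simp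
    simp only [Finset.mem_insert, Finset.mem_singleton] at m1 m2
    have hXX : X p t = X p t' ∧ Y p t = Y p t' := by omega
    obtain ⟨hb1, hb2, hb3, hb4⟩ := ix_bounds ht
    obtain ⟨hb1', hb2', hb3', hb4'⟩ := ix_bounds ht'
    have e1 : t.1 = t'.1 := f_inj hp0 (by omega)
    have hcross : f p t.2.2 + f p t'.2.1 = f p t'.2.2 + f p t.2.1 := by omega
    rcases sidon hp hp2 (by omega) (by omega) (by omega) (by omega) hcross with ⟨ha, hb⟩ | ⟨ha, hb⟩
    · obtain ⟨i, j, k⟩ := t; obtain ⟨i', j', k'⟩ := t'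
      simp only at e1 ha hb
      subst e1; subst ha; subst hb; rfl
    · exfalso
      omega
  · have h3 : tri p t = tri p t' := by
      rw [← EN_filter3 hr3 hr6 hp3 hodd ht, ← EN_filter3 hr3 hr6 hp3 hodd ht', h]
    exact tri_inj hp3 hodd ht ht' h3



section Hypergraph

def Efin (r p n : ℕ) (t : ℕ × ℕ × ℕ) : Finset (Fin n) :=
  ((EN r p t).filter (· < n)).attachFin (fun m hm => (Finset.mem_filter.mp hm).2)

def Hyp (r p n : ℕ) : Finset (Finset (Fin n)) := (Ix p).image (Efin r p n)

lemma EN_filter_n {r p n : ℕ} (hp3 : 3 ≤ p) (hodd : p % 2 = 1) (hn : 8*(p*p) ≤ n)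
    {t : ℕ × ℕ × ℕ} (ht : t ∈ Ix p) : (EN r p t).filter (· < n) = EN r p t := by
  apply Finset.filter_true_of_mem
  intro w hw
  have h2 := mem_EN_lt hp3 hodd ht hw
  show w < n
  unfold D at h2
  omega

lemma mem_Efin {r p n : ℕ} (hp3 : 3 ≤ p) (hodd : p % 2 = 1) (hn : 8*(p*p) ≤ n)
    {t : ℕ × ℕ × ℕ} (ht : t ∈ Ix p) {v : Fin n} :
    v ∈ Efin r p n t ↔ (v : ℕ) ∈ EN r p t := by
  rw [Efin, Finset.mem_attachFin, EN_filter_n hp3 hodd hn ht]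

lemma Efin_card {r p n : ℕ} (hr2 : 2 ≤ r) (hr6 : r ≤ 6) (hp3 : 3 ≤ p) (hodd : p % 2 = 1)
    (hn : 8*(p*p) ≤ n) {t : ℕ × ℕ × ℕ} (ht : t ∈ Ix p) : (Efin r p n t).card = r := by
  rw [Efin, Finset.card_attachFin, EN_filter_n hp3 hodd hn ht]
  exact EN_card hr2 hr6 hp3 hodd ht

lemma Hyp_uniform {r p n : ℕ} (hr2 : 2 ≤ r) (hr6 : r ≤ 6) (hp3 : 3 ≤ p) (hodd : p % 2 = 1)
    (hn : 8*(p*p) ≤ n) : ∀ e ∈ Hyp r p n, e.card = r := by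
  intro e he
  obtain ⟨t, ht, rfl⟩ := Finset.mem_image.mp he
  exact Efin_card hr2 hr6 hp3 hodd hn ht

lemma Efin_inj {r p n : ℕ} (hp : p.Prime) (hp3 : 3 ≤ p) (hodd : p % 2 = 1)
    (hr2 : 2 ≤ r) (hr6 : r ≤ 6) (hn : 8*(p*p) ≤ n) :
    Set.InjOn (Efin r p n) (Ix p) := by
  intro t ht t' ht' h
  apply EN_inj hp hp3 hodd hr2 hr6 ht ht'
  ext w
  constructor
  · intro hw
    have hwn : w < n := by
      have h2 := mem_EN_lt hp3 hodd ht hw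
      unfold D at h2; omega
    have h3 : (⟨w, hwn⟩ : Fin n) ∈ Efin r p n t := (mem_Efin hp3 hodd hn ht).mpr hw
    rw [h] at h3
    exact (mem_Efin hp3 hodd hn ht').mp h3
  · intro hw
    have hwn : w < n := by
      have h2 := mem_EN_lt hp3 hodd ht' hw
      unfold D at h2; omega
    have h3 : (⟨w, hwn⟩ : Fin n) ∈ Efin r p n t' := (mem_Efin hp3 hodd hn ht').mpr hw
    rw [← h] at h3
    exact (mem_Efin hp3 hodd hn ht).mp h3

lemma Hyp_card {r p n : ℕ} (hp : p.Prime) (hp3 : 3 ≤ p) (hodd : p % 2 = 1)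
    (hr2 : 2 ≤ r) (hr6 : r ≤ 6) (hn : 8*(p*p) ≤ n) :
    (Hyp r p n).card = q0 p * (q0 p * q0 p) := by
  rw [Hyp, Finset.card_image_of_injOn (Efin_inj hp hp3 hodd hr2 hr6 hn)]
  rw [Ix, Finset.card_product, Finset.card_product, Nat.card_Ico, Nat.card_Ico, Nat.card_Ico]
  have e1 : h0 p + q0 p - h0 p = q0 p := by omega
  have e2 : h0 p + 2*q0 p - (h0 p + q0 p) = q0 p := by omega
  have e3 : h0 p + 3*q0 p - (h0 p + 2*q0 p) = q0 p := by omega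
  rw [e1, e2, e3]

end Hypergraph

section Core

def IsTri (p : ℕ) (s : Finset ℕ) : Prop :=
  s.card = 3 ∧ ∀ u ∈ s, ∀ v ∈ s, u ≠ v → u + v ∈ A p

lemma tri_isTri {p : ℕ} (hp3 : 3 ≤ p) (hodd : p % 2 = 1) {t : ℕ × ℕ × ℕ} (ht : t ∈ Ix p) :
    IsTri p (tri p t) := ⟨tri_card hp3 hodd ht, tri_clique hp3 hodd ht⟩

lemma third {s : Finset ℕ} {u v : ℕ} (hs : s.card = 3) (hu : u ∈ s) (hv : v ∈ s)
    (huv : u ≠ v) : ∃ w ∈ s, w ≠ u ∧ w ≠ v ∧ s = {u, v, w} := by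
  have hsub : ({u, v} : Finset ℕ) ⊆ s := by
    intro x hx
    simp only [Finset.mem_insert, Finset.mem_singleton] at hx
    rcases hx with rfl | rfl <;> assumption
  have hc2 : ({u, v} : Finset ℕ).card = 2 := by
    rw [Finset.card_insert_of_notMem (by simpa using huv), Finset.card_singleton]
  have hd : (s \ {u, v}).card = 1 := by
    rw [Finset.card_sdiff_of_subset hsub, hs, hc2]
  obtain ⟨w, hw⟩ := Finset.card_eq_one.mp hd
  have hws : w ∈ s \ ({u, v} : Finset ℕ) := by rw [hw]; exact Finset.mem_singleton_self w
  rw [Finset.mem_sdiff] at hws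
  obtain ⟨hwsS, hwnot⟩ := hws
  simp only [Finset.mem_insert, Finset.mem_singleton, not_or] at hwnot
  refine ⟨w, hwsS, hwnot.1, hwnot.2, ?_⟩
  have hsub2 : ({u, v, w} : Finset ℕ) ⊆ s := by
    intro x hx
    simp only [Finset.mem_insert, Finset.mem_singleton] at hx
    rcases hx with rfl | rfl | rfl <;> assumption
  have hc3 : ({u, v, w} : Finset ℕ).card = 3 := by
    rw [Finset.card_insert_of_notMem, Finset.card_insert_of_notMem, Finset.card_singleton]
    · simp only [Finset.mem_singleton]; exact fun h => hwnot.2 h.symm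
    · simp only [Finset.mem_insert, Finset.mem_singleton, not_or]
      exact ⟨huv, fun h => hwnot.1 h.symm⟩
  exact (Finset.eq_of_subset_of_card_le hsub2 (by omega)).symm

lemma share2 {p : ℕ} (hp : p.Prime) (hp2 : p ≠ 2) {s s' : Finset ℕ}
    (hs : IsTri p s) (hs' : IsTri p s') {u v : ℕ}
    (hu : u ∈ s) (hu' : u ∈ s') (hv : v ∈ s) (hv' : v ∈ s') (huv : u ≠ v) : s = s' := by
  obtain ⟨w, hws, hwu, hwv, hseq⟩ := third hs.1 hu hv huv
  obtain ⟨w', hws', hwu', hwv', hseq'⟩ := third hs'.1 hu' hv' huv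
  by_cases hww : w = w'
  · rw [hseq, hseq', hww]
  · exfalso
    refine noC4 hp hp2 (w1 := w) (w2 := u) (w3 := w') (w4 := v) hww huv ?_ ?_ ?_ ?_
    · exact hs.2 w hws u hu hwu
    · exact hs'.2 u hu' w' hws' (fun h => hwu' h.symm)
    · exact hs'.2 w' hws' v hv' hwv'
    · exact hs.2 v hv w hws (fun h => hwv h.symm)

lemma adjCase {p : ℕ} (hp : p.Prime) (hp2 : p ≠ 2) {s2 s3 s4 : Finset ℕ}
    (h2 : IsTri p s2) (h3 : IsTri p s3) (h4 : IsTri p s4) (h24 : s2 ≠ s4)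
    {w1 w3 w4 : ℕ} (d13 : w1 ≠ w3) (d34 : w3 ≠ w4) (d41 : w4 ≠ w1)
    (m12 : w1 ∈ s2) (m32 : w3 ∈ s2) (m33 : w3 ∈ s3) (m43 : w4 ∈ s3)
    (m44 : w4 ∈ s4) (m14 : w1 ∈ s4) : False := by
  obtain ⟨b, hbs, hb1, hb3, hseq⟩ := third h2.1 m12 m32 d13
  by_cases hb4 : b = w4
  · obtain ⟨b', hbs', hb4', hb1', hseq'⟩ := third h4.1 m44 m14 d41
    by_cases hb3' : b' = w3
    · apply h24
      rw [hseq, hseq', hb4, hb3']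
      ext x
      simp only [Finset.mem_insert, Finset.mem_singleton]
      tauto
    · refine noC4 hp hp2 (w1 := w4) (w2 := b') (w3 := w1) (w4 := w3)
        d41 hb3' ?_ ?_ ?_ ?_
      · exact h4.2 w4 m44 b' hbs' (fun h => hb4' h.symm)
      · exact h4.2 b' hbs' w1 m14 hb1'
      · exact h2.2 w1 m12 w3 m32 d13
      · exact h3.2 w3 m33 w4 m43 d34
  · refine noC4 hp hp2 (w1 := w1) (w2 := b) (w3 := w3) (w4 := w4) d13 hb4 ?_ ?_ ?_ ?_
    · exact h2.2 w1 m12 b hbs (fun h => hb1 h.symm)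
    · exact h2.2 b hbs w3 m32 hb3
    · exact h3.2 w3 m33 w4 m43 d34
    · exact h4.2 w4 m44 w1 m14 d41

lemma core {p : ℕ} (hp : p.Prime) (hp2 : p ≠ 2) {t1 t2 t3 t4 : Finset ℕ}
    (H1 : IsTri p t1) (H2 : IsTri p t2) (H3 : IsTri p t3) (H4 : IsTri p t4)
    (hd12 : t1 ≠ t2) (hd13 : t1 ≠ t3) (hd14 : t1 ≠ t4)
    (hd23 : t2 ≠ t3) (hd24 : t2 ≠ t4) (hd34 : t3 ≠ t4)
    {u1 u2 u3 u4 : ℕ}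
    (m11 : u1 ∈ t1) (m21 : u2 ∈ t1) (m22 : u2 ∈ t2) (m32 : u3 ∈ t2)
    (m33 : u3 ∈ t3) (m43 : u4 ∈ t3) (m44 : u4 ∈ t4) (m14 : u1 ∈ t4)
    (ne123 : ¬(u1 = u2 ∧ u2 = u3)) (ne234 : ¬(u2 = u3 ∧ u3 = u4))
    (ne124 : ¬(u1 = u2 ∧ u2 = u4)) : False := by
  by_cases h13 : u1 = u3
  · have h12 : u1 ≠ u2 := by
      intro h; exact ne123 ⟨h, by omega⟩
    exact hd12 (share2 hp hp2 H1 H2 m21 m22 m11 (h13 ▸ m32) (fun h => h12 h.symm))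
  by_cases h24 : u2 = u4
  · have h23 : u2 ≠ u3 := by
      intro h; exact ne234 ⟨h, by omega⟩
    exact hd23 (share2 hp hp2 H2 H3 m32 m33 m22 (h24 ▸ m43) (fun h => h23 h.symm))
  by_cases h12 : u1 = u2
  · by_cases h34 : u3 = u4
    · exact hd24 (share2 hp hp2 H2 H4 (h12 ▸ m22) m14 m32 (h34 ▸ m44) h13)
    · have h41 : u4 ≠ u1 := by
        intro h; exact ne124 ⟨h12, by omega⟩
      exact adjCase hp hp2 H2 H3 H4 hd24 h13 h34 h41
        (h12 ▸ m22) m32 m33 m43 m44 m14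
  by_cases h23 : u2 = u3
  · by_cases h41 : u4 = u1
    · exact hd13 (share2 hp hp2 H1 H3 m21 (h23 ▸ m33) m11 (h41 ▸ m43) (fun h => h12 h.symm))
    · exact adjCase hp hp2 H3 H4 H1 (fun h => hd13 h.symm) h24 h41 h12
        (h23 ▸ m33) m43 m44 m14 m11 m21
  by_cases h34 : u3 = u4
  · have h31 : u3 ≠ u1 := fun h => h13 h.symm
    exact adjCase hp hp2 H4 H1 H2 (fun h => hd24 h.symm) h31 h12 h23
      (h34 ▸ m44) m14 m11 m21 m22 m32
  by_cases h41 : u4 = u1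
  · have h42 : u4 ≠ u2 := fun h => h24 h.symm
    have h34' : u3 ≠ u4 := h34
    exact adjCase hp hp2 H1 H2 H3 hd13 h42 h23 h34'
      (h41 ▸ m11) m21 m22 m32 m33 m43
  · exact noC4 hp hp2 h13 h24
      (H1.2 u1 m11 u2 m21 h12) (H2.2 u2 m22 u3 m32 h23)
      (H3.2 u3 m33 u4 m43 h34) (H4.2 u4 m44 u1 m14 h41)

end Core



section Berge

lemma two_slots {Dp x y : ℕ} (hx : x < 2*Dp) (hy : y < 2*Dp) (hxy : x % Dp = y % Dp)
    (hne : x ≠ y) : x = y + Dp ∨ y = x + Dp := by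
  rcases Nat.lt_or_ge x Dp with h1 | h1 <;> rcases Nat.lt_or_ge y Dp with h2 | h2
  · rw [Nat.mod_eq_of_lt h1, Nat.mod_eq_of_lt h2] at hxy
    exact absurd hxy hne
  · right
    rw [Nat.mod_eq_of_lt h1, Nat.mod_eq_sub_mod h2, Nat.mod_eq_of_lt (by omega)] at hxy
    omega
  · left
    rw [Nat.mod_eq_of_lt h2, Nat.mod_eq_sub_mod h1, Nat.mod_eq_of_lt (by omega)] at hxy
    omega
  · rw [Nat.mod_eq_sub_mod h1, Nat.mod_eq_of_lt (by omega),
      Nat.mod_eq_sub_mod h2, Nat.mod_eq_of_lt (by omega)] at hxy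
    omega

lemma no_three {Dp x y z : ℕ} (hx : x < 2*Dp) (hy : y < 2*Dp) (hz : z < 2*Dp)
    (hxy : x % Dp = y % Dp) (hyz : y % Dp = z % Dp)
    (nxy : x ≠ y) (nyz : y ≠ z) (nxz : x ≠ z) : False := by
  rcases two_slots hx hy hxy nxy with h1 | h1 <;>
    rcases two_slots hy hz hyz nyz with h2 | h2 <;>
    rcases two_slots hx hz (hxy.trans hyz) nxz with h3 | h3 <;> omega

lemma not_berge {r p n : ℕ} (hp : p.Prime) (hp3 : 3 ≤ p)
    (hr2 : 2 ≤ r) (hr6 : r ≤ 6) (hn : 8*(p*p) ≤ n) :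
    ¬ IsBerge (SimpleGraph.cycleGraph 4) (Hyp r p n) := by
  have hodd : p % 2 = 1 := Nat.odd_iff.mp (hp.odd_of_ne_two (by omega))
  have hp2 : p ≠ 2 := by omega
  rintro ⟨ψ, φ, hψ, hφinj, hφmem, hadj⟩
  have a01 : (SimpleGraph.cycleGraph 4).Adj 0 1 := by decide
  have a12 : (SimpleGraph.cycleGraph 4).Adj 1 2 := by decide
  have a23 : (SimpleGraph.cycleGraph 4).Adj 2 3 := by decide
  have a30 : (SimpleGraph.cycleGraph 4).Adj 3 0 := by decide
  have he01 : s((0 : Fin 4), (1 : Fin 4)) ∈ (SimpleGraph.cycleGraph 4).edgeSet :=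
    ((SimpleGraph.cycleGraph 4).mem_edgeSet).mpr a01
  have he12 : s((1 : Fin 4), (2 : Fin 4)) ∈ (SimpleGraph.cycleGraph 4).edgeSet :=
    ((SimpleGraph.cycleGraph 4).mem_edgeSet).mpr a12
  have he23 : s((2 : Fin 4), (3 : Fin 4)) ∈ (SimpleGraph.cycleGraph 4).edgeSet :=
    ((SimpleGraph.cycleGraph 4).mem_edgeSet).mpr a23
  have he30 : s((3 : Fin 4), (0 : Fin 4)) ∈ (SimpleGraph.cycleGraph 4).edgeSet :=
    ((SimpleGraph.cycleGraph 4).mem_edgeSet).mpr a30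
  obtain ⟨t1, ht1, hE1⟩ := Finset.mem_image.mp (hφmem _ he01)
  obtain ⟨t2, ht2, hE2⟩ := Finset.mem_image.mp (hφmem _ he12)
  obtain ⟨t3, ht3, hE3⟩ := Finset.mem_image.mp (hφmem _ he23)
  obtain ⟨t4, ht4, hE4⟩ := Finset.mem_image.mp (hφmem _ he30)
  -- the four hyperedges are distinct, hence the four triples are distinct
  have htt : ∀ {a b : ℕ × ℕ × ℕ}, a ∈ Ix p → b ∈ Ix p →
      ∀ {e e' : Sym2 (Fin 4)}, e ∈ (SimpleGraph.cycleGraph 4).edgeSet →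
      e' ∈ (SimpleGraph.cycleGraph 4).edgeSet →
      Efin r p n a = φ e → Efin r p n b = φ e' → e ≠ e' → tri p a ≠ tri p b := by
    intro a b ha hb e e' hee hee' hfa hfb hne htri
    have hab : a = b := tri_inj hp3 hodd ha hb htri
    apply hne
    apply hφinj hee hee'
    rw [← hfa, ← hfb, hab]
  have d12 : tri p t1 ≠ tri p t2 := htt ht1 ht2 he01 he12 hE1 hE2 (by decide)
  have d13 : tri p t1 ≠ tri p t3 := htt ht1 ht3 he01 he23 hE1 hE3 (by decide)
  have d14 : tri p t1 ≠ tri p t4 := htt ht1 ht4 he01 he30 hE1 hE4 (by decide)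
  have d23 : tri p t2 ≠ tri p t3 := htt ht2 ht3 he12 he23 hE2 hE3 (by decide)
  have d24 : tri p t2 ≠ tri p t4 := htt ht2 ht4 he12 he30 hE2 hE4 (by decide)
  have d34 : tri p t3 ≠ tri p t4 := htt ht3 ht4 he23 he30 hE3 hE4 (by decide)
  -- vertices
  obtain ⟨hv01, hv11⟩ := hadj a01   -- ψ 0, ψ 1 ∈ φ s(0,1)
  obtain ⟨hv12, hv22⟩ := hadj a12
  obtain ⟨hv23, hv33⟩ := hadj a23
  obtain ⟨hv34, hv04⟩ := hadj a30
  rw [← hE1] at hv01 hv11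
  rw [← hE2] at hv12 hv22
  rw [← hE3] at hv23 hv33
  rw [← hE4] at hv34 hv04
  have w01 : ((ψ 0 : Fin n) : ℕ) ∈ EN r p t1 := (mem_Efin hp3 hodd hn ht1).mp hv01
  have w11 : ((ψ 1 : Fin n) : ℕ) ∈ EN r p t1 := (mem_Efin hp3 hodd hn ht1).mp hv11
  have w12 : ((ψ 1 : Fin n) : ℕ) ∈ EN r p t2 := (mem_Efin hp3 hodd hn ht2).mp hv12
  have w22 : ((ψ 2 : Fin n) : ℕ) ∈ EN r p t2 := (mem_Efin hp3 hodd hn ht2).mp hv22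
  have w23 : ((ψ 2 : Fin n) : ℕ) ∈ EN r p t3 := (mem_Efin hp3 hodd hn ht3).mp hv23
  have w33 : ((ψ 3 : Fin n) : ℕ) ∈ EN r p t3 := (mem_Efin hp3 hodd hn ht3).mp hv33
  have w34 : ((ψ 3 : Fin n) : ℕ) ∈ EN r p t4 := (mem_Efin hp3 hodd hn ht4).mp hv34
  have w04 : ((ψ 0 : Fin n) : ℕ) ∈ EN r p t4 := (mem_Efin hp3 hodd hn ht4).mp hv04
  set x0 : ℕ := ((ψ 0 : Fin n) : ℕ) with hx0
  set x1 : ℕ := ((ψ 1 : Fin n) : ℕ) with hx1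
  set x2 : ℕ := ((ψ 2 : Fin n) : ℕ) with hx2
  set x3 : ℕ := ((ψ 3 : Fin n) : ℕ) with hx3
  have hb0 : x0 < 2 * D p := mem_EN_lt hp3 hodd ht1 w01
  have hb1 : x1 < 2 * D p := mem_EN_lt hp3 hodd ht1 w11
  have hb2 : x2 < 2 * D p := mem_EN_lt hp3 hodd ht2 w22
  have hb3 : x3 < 2 * D p := mem_EN_lt hp3 hodd ht3 w33
  have hxne : ∀ {a b : Fin 4}, a ≠ b → ((ψ a : Fin n) : ℕ) ≠ ((ψ b : Fin n) : ℕ) := by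
    intro a b hab h
    exact hab (hψ (Fin.val_injective h))
  -- base vertices
  have u11 : x0 % D p ∈ tri p t1 := mem_EN_mod hp3 hodd ht1 w01
  have u21 : x1 % D p ∈ tri p t1 := mem_EN_mod hp3 hodd ht1 w11
  have u22 : x1 % D p ∈ tri p t2 := mem_EN_mod hp3 hodd ht2 w12
  have u32 : x2 % D p ∈ tri p t2 := mem_EN_mod hp3 hodd ht2 w22
  have u33 : x2 % D p ∈ tri p t3 := mem_EN_mod hp3 hodd ht3 w23
  have u43 : x3 % D p ∈ tri p t3 := mem_EN_mod hp3 hodd ht3 w33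
  have u44 : x3 % D p ∈ tri p t4 := mem_EN_mod hp3 hodd ht4 w34
  have u14 : x0 % D p ∈ tri p t4 := mem_EN_mod hp3 hodd ht4 w04
  apply core hp hp2 (tri_isTri hp3 hodd ht1) (tri_isTri hp3 hodd ht2)
    (tri_isTri hp3 hodd ht3) (tri_isTri hp3 hodd ht4)
    d12 d13 d14 d23 d24 d34 u11 u21 u22 u32 u33 u43 u44 u14
  · rintro ⟨h1, h2⟩
    exact no_three hb0 hb1 hb2 h1 h2 (hxne (by decide)) (hxne (by decide)) (hxne (by decide))
  · rintro ⟨h1, h2⟩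
    exact no_three hb1 hb2 hb3 h1 h2 (hxne (by decide)) (hxne (by decide)) (hxne (by decide))
  · rintro ⟨h1, h2⟩
    exact no_three hb0 hb1 hb3 h1 h2 (hxne (by decide)) (hxne (by decide)) (hxne (by decide))

end Berge



end Stmt10Aux

open Stmt10Aux
/-- For `2 ≤ r ≤ 6`, `ex_r(n, C_4) = Ω(n^(3/2))`: there is `c > 0` such that
for all large `n` there is an `r`-uniform Berge-`C_4`-free hypergraph on `n` vertices with
at least `c n^(3/2)` hyperedges. -/
theorem stmt10 (r : ℕ) (hr2 : 2 ≤ r) (hr : r ≤ 6) :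
    ∃ c : ℝ, 0 < c ∧ ∀ᶠ n : ℕ in atTop,
      ∃ H : Finset (Finset (Fin n)),
        (∀ e ∈ H, e.card = r) ∧ ¬ IsBerge (SimpleGraph.cycleGraph 4) H ∧
        c * (n : ℝ) ^ ((3 : ℝ) / 2) ≤ (H.card : ℝ) := by
  classical
  refine ⟨1/10^7, by norm_num, ?_⟩
  rw [Filter.eventually_atTop]
  refine ⟨10^9, fun n hn => ?_⟩
  set m := Nat.sqrt (n / 32) with hm
  have hm16 : 5000 ≤ m := by
    rw [hm, Nat.le_sqrt]
    omega
  obtain ⟨p, hp, hmp, hp2m⟩ := Nat.exists_prime_lt_and_le_two_mul m (by omega)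
  have hp3 : 3 ≤ p := by omega
  have hp16 : 5000 ≤ p := by omega
  have hodd : p % 2 = 1 := Nat.odd_iff.mp (hp.odd_of_ne_two (by omega))
  have hmm : m * m ≤ n / 32 := Nat.sqrt_le _
  have hpp_ub : p * p ≤ 4 * (m * m) := by
    have h1 : p * p ≤ (2*m) * (2*m) := Nat.mul_le_mul hp2m hp2m
    have h2 : (2*m)*(2*m) = 4*(m*m) := by ring
    omega
  have hn8 : 8 * (p * p) ≤ n := by
    have h1 : 8*(p*p) ≤ 32*(m*m) := by omega
    have h2 : 32*(m*m) ≤ 32*(n/32) := by omega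
    have h3 : 32*(n/32) ≤ n := by omega
    omega
  have hlow : n < 36 * (p * p) := by
    have h1 : n / 32 < (m+1)*(m+1) := Nat.lt_succ_sqrt _
    have h3 : (m+1)*(m+1) ≤ p*p := Nat.mul_le_mul hmp hmp
    have hpp9 : 5000*5000 ≤ p*p := Nat.mul_le_mul hp16 hp16
    have h4 : n < 32*(n/32) + 32 := by omega
    have h5 : n/32 < p*p := lt_of_lt_of_le h1 h3
    nlinarith [h4, h5, hpp9]
  refine ⟨Hyp r p n, Hyp_uniform hr2 hr hp3 hodd hn8, not_berge hp hp3 hr2 hr hn8, ?_⟩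
  rw [Hyp_card hp hp3 hodd hr2 hr hn8]
  have hq : p ≤ 16 * q0 p := by unfold Stmt10Aux.q0; omega
  have hn0 : (0:ℝ) < n := by
    have : 0 < n := by omega
    exact_mod_cast this
  have h32 : (n:ℝ) ^ ((3:ℝ)/2) = (n:ℝ) * Real.sqrt n := by
    rw [show (3:ℝ)/2 = 1 + 1/2 by norm_num, Real.rpow_add hn0, Real.rpow_one,
      ← Real.sqrt_eq_rpow]
  rw [h32]
  have hA1 : (n:ℝ) ≤ 36 * (p:ℝ)^2 := by
    have h1 : (n:ℝ) < 36*((p:ℝ)*(p:ℝ)) := by exact_mod_cast hlow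
    nlinarith [h1]
  have hA2 : Real.sqrt n ≤ 6 * (p:ℝ) := by
    rw [show (6:ℝ)*(p:ℝ) = Real.sqrt ((6*(p:ℝ))^2) from (Real.sqrt_sq (by positivity)).symm]
    apply Real.sqrt_le_sqrt
    nlinarith [hA1]
  have hA3 : (p:ℝ) ≤ 16 * ((q0 p : ℕ) : ℝ) := by exact_mod_cast hq
  have hp0R : (0:ℝ) ≤ (p:ℝ) := Nat.cast_nonneg _
  have hsn : (0:ℝ) ≤ Real.sqrt n := Real.sqrt_nonneg _
  have hcast : ((q0 p * (q0 p * q0 p) : ℕ) : ℝ) = ((q0 p : ℕ) : ℝ)^3 := by push_cast; ring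
  rw [hcast]
  calc (1/10^7 : ℝ) * ((n:ℝ) * Real.sqrt n)
      ≤ (1/10^7) * ((36*(p:ℝ)^2) * (6*(p:ℝ))) := by
        apply mul_le_mul_of_nonneg_left _ (by norm_num)
        exact mul_le_mul hA1 hA2 hsn (by positivity)
    _ = (216/10^7) * (p:ℝ)^3 := by ring
    _ ≤ (216/10^7) * (16*((q0 p : ℕ) : ℝ))^3 := by
        apply mul_le_mul_of_nonneg_left _ (by norm_num)
        exact pow_le_pow_left₀ hp0R hA3 3
    _ = (216*4096/10^7) * ((q0 p : ℕ) : ℝ)^3 := by ring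
    _ ≤ 1 * ((q0 p : ℕ) : ℝ)^3 := by
        apply mul_le_mul_of_nonneg_right _ (by positivity)
        norm_num
    _ = ((q0 p : ℕ) : ℝ)^3 := one_mul _
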